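/- arXiv:1308.4557 — 5 statements merged into one kernel-verified Lean document; each statement's English description precedes it below -/
import Mathlib

section
/- Objects (X, ∼) and (Y, ≈) of Split†[Rel] are isomorphic if and only if the quotient sets Dom(∼)/∼ and Dom(≈)/≈ have the same cardinality (are in bijection). -/
/-!
An isomorphism `R : (X, ∼) → (Y, ≈)` of `Split†[Rel]` is unitary: its inverse is the converse
relation `Rᵀ`. That the composites of `R` and `Rᵀ` in both orders are `∼` and `≈` then says
that `R` relates every `∼`-class to exactly one `≈`-class and vice versa, i.e. `R` is the graph
of a bijection `Dom(∼)/∼ ≃ Dom(≈)/≈`. Conversely the graph of a bijection of the quotients,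
read back as a relation on representatives, is an isomorphism whose inverse is the graph of the
inverse bijection.
-/

/-- The domain of a partial equivalence relation. -/
def PerDom {X : Type*} (r : X → X → Prop) : Type _ := {x : X // r x x}

/-- The quotient `Dom(∼)/∼`. -/
def PerQuot {X : Type*} (r : X → X → Prop) : Type _ :=
  Quot (fun a b : PerDom r => r a.val b.val)

local infixr:80 " ∘r " => Relation.Comp

section

variable {X Y Z : Type*} {r : X → X → Prop} {s : Y → Y → Prop} {t : Z → Z → Prop}

theorem PerDom.equivalence (hr : Symmetric r ∧ Transitive r) :
    Equivalence (fun a b : PerDom r => r a.1 b.1) :=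
  ⟨fun a => a.2, fun h => hr.1 h, fun h h' => hr.2 h h'⟩

theorem rel_self_of_rel {R : X → Y → Prop} (hcod : flip R ∘r R = s) {x : X} {y : Y} (h : R x y) :
    s y y :=
  hcod ▸ ⟨x, h, h⟩

theorem exists_rel_of_rel_self {R : X → Y → Prop} (hdom : R ∘r flip R = r) {x : X} (hx : r x x) :
    ∃ y, R x y := by
  rw [← hdom] at hx
  obtain ⟨y, h, -⟩ := hx
  exact ⟨y, h⟩

theorem rel_of_inverse_rel {R : X → Y → Prop} {S : Y → X → Prop} (hr : Symmetric r)
    (hs : Symmetric s ∧ Transitive s) (hsat : r ∘r R ∘r s = R) (hS : s ∘r S ∘r r = S)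
    (hRS : R ∘r S = r) (hSR : S ∘r R = s) {x : X} {y : Y} (h : S y x) : R x y := by
  have hy : s y y := by
    rw [← hS] at h
    obtain ⟨b, hyb, -⟩ := h
    exact hs.2 hyb (hs.1 hyb)
  obtain ⟨x₀, -, hx₀y⟩ : (S ∘r R) y y := by rwa [hSR]
  have hx₀x : r x₀ x := hRS ▸ ⟨y, hx₀y, h⟩
  exact hsat ▸ ⟨x₀, hr hx₀x, y, hx₀y, hy⟩

theorem inverse_eq_flip {R : X → Y → Prop} {S : Y → X → Prop} (hr : Symmetric r ∧ Transitive r)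
    (hs : Symmetric s ∧ Transitive s) (hsat : r ∘r R ∘r s = R) (hS : s ∘r S ∘r r = S)
    (hRS : R ∘r S = r) (hSR : S ∘r R = s) : S = flip R :=
  funext₂ fun _ _ => propext
    ⟨rel_of_inverse_rel hr.1 hs hsat hS hRS hSR, rel_of_inverse_rel hs.1 hr hS hsat hSR hRS⟩

namespace PerQuot

def mk (x : X) (hx : r x x) : PerQuot r := Quot.mk _ ⟨x, hx⟩

theorem mk_eq_mk_iff (hr : Symmetric r ∧ Transitive r) {x x' : X} (hx : r x x) (hx' : r x' x') :
    mk x hx = mk x' hx' ↔ r x x' :=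
  Quot.eq.trans (PerDom.equivalence hr).eqvGen_iff

theorem exists_mk_eq (q : PerQuot r) : ∃ (x : X) (hx : r x x), mk x hx = q := by
  obtain ⟨⟨x, hx⟩, rfl⟩ := Quot.exists_rep q
  exact ⟨x, hx, rfl⟩

def graphRel (f : PerQuot r → PerQuot s) (x : X) (y : Y) : Prop :=
  ∃ (hx : r x x) (hy : s y y), f (mk x hx) = mk y hy

theorem comp_graphRel_comp (hr : Symmetric r ∧ Transitive r) (hs : Symmetric s ∧ Transitive s)
    (f : PerQuot r → PerQuot s) : r ∘r graphRel f ∘r s = graphRel f := by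
  funext x y
  refine propext ⟨?_, fun ⟨hx, hy, hf⟩ => ⟨x, hx, y, ⟨hx, hy, hf⟩, hy⟩⟩
  rintro ⟨a, hxa, b, ⟨ha, hb, hf⟩, hby⟩
  have hx : r x x := hr.2 hxa (hr.1 hxa)
  have hy : s y y := hs.2 (hs.1 hby) hby
  refine ⟨hx, hy, ?_⟩
  rw [(mk_eq_mk_iff hr hx ha).2 hxa, hf, (mk_eq_mk_iff hs hb hy).2 hby]

theorem graphRel_comp_graphRel (f : PerQuot r → PerQuot s) (g : PerQuot s → PerQuot t) :
    graphRel f ∘r graphRel g = graphRel (g ∘ f) := by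
  funext x z
  refine propext
    ⟨fun ⟨y, ⟨hx, _, hf⟩, ⟨_, hz, hg⟩⟩ => ⟨hx, hz, by simp only [Function.comp, hf, hg]⟩, ?_⟩
  rintro ⟨hx, hz, hgf⟩
  obtain ⟨y, hy, hf⟩ := exists_mk_eq (f (mk x hx))
  exact ⟨y, ⟨hx, hy, hf.symm⟩, ⟨hy, hz, by rw [hf]; exact hgf⟩⟩

theorem graphRel_id (hr : Symmetric r ∧ Transitive r) :
    graphRel (id : PerQuot r → PerQuot r) = r := by
  funext x x'
  refine propext ⟨fun ⟨hx, hx', h⟩ => (mk_eq_mk_iff hr hx hx').1 h, fun h => ?_⟩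
  have hx : r x x := hr.2 h (hr.1 h)
  have hx' : r x' x' := hr.2 (hr.1 h) h
  exact ⟨hx, hx', (mk_eq_mk_iff hr hx hx').2 h⟩

theorem exists_map_mk_eq_of_rel {R : X → Y → Prop} (hsat : r ∘r R ∘r s = R)
    (hdom : R ∘r flip R = r) (hcod : flip R ∘r R = s) :
    ∃ f : PerQuot r → PerQuot s,
      ∀ x y (hx : r x x) (hy : s y y), R x y → f (mk x hx) = mk y hy := by
  choose g hg using fun x (hx : r x x) => exists_rel_of_rel_self hdom hx
  have rel_of_rel {x x' y y'} (hxx' : r x x') (hxy : R x y) (hx'y' : R x' y') : s y y' :=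
    hcod ▸ ⟨x, hxy, hsat ▸ ⟨x', hxx', y', hx'y', rel_self_of_rel hcod hx'y'⟩⟩
  refine ⟨Quot.lift (fun a => mk (g a.1 a.2) (rel_self_of_rel hcod (hg a.1 a.2)))
    fun a b hab => Quot.sound (rel_of_rel hab (hg a.1 a.2) (hg b.1 b.2)), fun x y hx hy hxy => ?_⟩
  exact Quot.sound (rel_of_rel hx (hg x hx) hxy)

theorem nonempty_equiv_of_comp_flip {R : X → Y → Prop} (hsat : r ∘r R ∘r s = R)
    (hsat_flip : s ∘r flip R ∘r r = flip R) (hdom : R ∘r flip R = r) (hcod : flip R ∘r R = s) :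
    Nonempty (PerQuot r ≃ PerQuot s) := by
  obtain ⟨f, hf⟩ := exists_map_mk_eq_of_rel hsat hdom hcod
  obtain ⟨g, hg⟩ := exists_map_mk_eq_of_rel hsat_flip hcod hdom
  refine ⟨{ toFun := f, invFun := g, left_inv := fun p => ?_, right_inv := fun q => ?_ }⟩
  · obtain ⟨x, hx, rfl⟩ := exists_mk_eq p
    obtain ⟨y, hxy⟩ := exists_rel_of_rel_self hdom hx
    rw [hf x y hx (rel_self_of_rel hcod hxy) hxy, hg y x _ hx hxy]
  · obtain ⟨y, hy, rfl⟩ := exists_mk_eq q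
    obtain ⟨x, hxy⟩ := exists_rel_of_rel_self hcod hy
    rw [hg y x hy (rel_self_of_rel hdom hxy) hxy, hf x y _ hy hxy]

end PerQuot

end

/-- Objects `(X, ∼)` and `(Y, ≈)` of `Split†[Rel]` (pairs of a set with a
partial equivalence relation; morphisms `(X,∼) → (Y,≈)` are relations `R` with
`R = ≈ ∘ R ∘ ∼`; the identity on `(X,∼)` is `∼` itself) are isomorphic iff the
quotients `Dom(∼)/∼` and `Dom(≈)/≈` are in bijection. -/
theorem stmt4 {X Y : Type*} (r : X → X → Prop) (s : Y → Y → Prop)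
    (hr : Symmetric r ∧ Transitive r) (hs : Symmetric s ∧ Transitive s) :
    (∃ (R : Rel X Y) (S : Rel Y X),
      Relation.Comp (r : Rel X X) (Relation.Comp R (s : Rel Y Y)) = R ∧
      Relation.Comp (s : Rel Y Y) (Relation.Comp S (r : Rel X X)) = S ∧
      Relation.Comp R S = (r : Rel X X) ∧
      Relation.Comp S R = (s : Rel Y Y)) ↔
    Nonempty (PerQuot r ≃ PerQuot s) := by
  constructor
  · rintro ⟨R, S, hR, hS, hRS, hSR⟩
    obtain rfl := inverse_eq_flip hr hs hR hS hRS hSR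
    exact PerQuot.nonempty_equiv_of_comp_flip hR hS hRS hSR
  · rintro ⟨e⟩
    refine ⟨PerQuot.graphRel e, PerQuot.graphRel e.symm, PerQuot.comp_graphRel_comp hr hs e,
      PerQuot.comp_graphRel_comp hs hr e.symm, ?_, ?_⟩
    · rw [PerQuot.graphRel_comp_graphRel, e.symm_comp_self, PerQuot.graphRel_id hr]
    · rw [PerQuot.graphRel_comp_graphRel, e.self_comp_symm, PerQuot.graphRel_id hs]
end

section
/- Let G be the connected groupoid with 3 objects a, b, c and 9 morphisms (exactly one morphism between each ordered pair of objects), and let R be the partial identity relation on Mor(G) relating each morphism of G to itself except the two morphisms between a and c (which are related to nothing). Then R is a dagger idempotent in CP*[Rel] that does not dagger split in CP*[Rel]. -/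
/-!
If `S` splits `R`, then `S† ∘ S = id` makes `S` a surjective partial function onto `Mor(H)`,
and `S ∘ S† = R` makes it injective. Pick images `f` of `a → b` and `f'` of `b → c`; since `S`
respects identities of domains, the identity at `b` forces `cod f = dom f'`, so `f ≫ f'` exists
in `H`. Its preimage `g` then has domain `a` and codomain `c`, i.e. `g` is the morphism `a → c`,
which `R` relates to nothing.
-/

open CategoryTheory

/-- The morphism set of a groupoid. -/
def GrpMor (H : Type*) [Groupoid H] : Type _ := Σ X Y : H, X ⟶ Y

/-- The inverse of a groupoid morphism. -/
def grpInv (H : Type*) [Groupoid H] (f : GrpMor H) : GrpMor H :=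
  ⟨f.2.1, f.1, Groupoid.inv f.2.2⟩

/-- The identity on the domain of a groupoid morphism. -/
def grpIdDom (H : Type*) [Groupoid H] (f : GrpMor H) : GrpMor H :=
  ⟨f.1, f.1, 𝟙 f.1⟩

/-- Morphisms of the indiscrete (connected) groupoid on `Fin 3`: a pair `(i,j)`
is the unique morphism `i → j`; there are `3` objects and `9` morphisms. -/
abbrev IndMor : Type := Fin 3 × Fin 3

/-- Inverse in the indiscrete groupoid on `Fin 3`. -/
def indInv (m : IndMor) : IndMor := (m.2, m.1)

/-- Identity on the domain in the indiscrete groupoid on `Fin 3`. -/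
def indIdDom (m : IndMor) : IndMor := (m.1, m.1)

/-- The partial identity relation on the morphisms of the indiscrete groupoid
on `{a,b,c} = {0,1,2}` which omits the two morphisms between `a = 0` and
`c = 2`. -/
def Rrel : Rel IndMor IndMor := fun m m' => m = m' ∧ m ≠ (0, 2) ∧ m ≠ (2, 0)

namespace Relation

variable {α β : Type*}

theorem flip_restrict_eq (P : α → Prop) :
    flip (fun a b : α => a = b ∧ P a) = fun a b => a = b ∧ P a := by
  funext a b
  simp only [flip, eq_iff_iff]
  constructor <;> rintro ⟨rfl, ha⟩ <;> exact ⟨rfl, ha⟩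

theorem comp_restrict_self (P : α → Prop) :
    Comp (fun a b : α => a = b ∧ P a) (fun a b => a = b ∧ P a) = fun a b => a = b ∧ P a := by
  funext a b
  simp only [Comp, eq_iff_iff]
  constructor
  · rintro ⟨_, ⟨rfl, ha⟩, rfl, -⟩
    exact ⟨rfl, ha⟩
  · rintro ⟨rfl, ha⟩
    exact ⟨a, ⟨rfl, ha⟩, rfl, ha⟩

variable {S : α → β → Prop}

section Isometry

variable (hS : Comp (flip S) S = (· = ·))
include hS

theorem eq_of_flip_comp_eq_eq {a : α} {b b' : β} (hb : S a b) (hb' : S a b') : b = b' := by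
  have h : Comp (flip S) S b b' := ⟨a, hb, hb'⟩
  rwa [hS] at h

theorem exists_of_flip_comp_eq_eq (b : β) : ∃ a, S a b := by
  have h : Comp (flip S) S b b := by rw [hS]
  obtain ⟨a, ha, -⟩ := h
  exact ⟨a, ha⟩

end Isometry

section Coisometry

variable {R : α → α → Prop} (hS : Comp S (flip S) = R)
include hS

theorem rel_of_comp_flip_eq {a a' : α} {b : β} (ha : S a b) (ha' : S a' b) : R a a' := by
  rw [← hS]
  exact ⟨b, ha, ha'⟩

theorem exists_of_comp_flip_eq {a : α} (ha : R a a) : ∃ b, S a b := by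
  rw [← hS] at ha
  obtain ⟨b, hb, -⟩ := ha
  exact ⟨b, hb⟩

end Coisometry

end Relation

theorem grpIdDom_eq_of_fst_eq {H : Type*} [Groupoid H] {f f' : GrpMor H} (h : f.1 = f'.1) :
    grpIdDom H f = grpIdDom H f' := by
  obtain ⟨X, Y, f⟩ := f
  obtain ⟨X', Y', f'⟩ := f'
  cases h
  rfl

theorem Rrel_preserves_indInv_indIdDom :
    ∀ g h, Rrel g h → Rrel (indInv g) (indInv h) ∧ Rrel (indIdDom g) (indIdDom h) := by
  unfold Rrel indInv indIdDom
  decide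

section Splitting

variable {H : Type*} [Groupoid H] {S : IndMor → GrpMor H → Prop}
  (hmor : ∀ g h, S g h → S (indInv g) (grpInv H h) ∧ S (indIdDom g) (grpIdDom H h))
include hmor

theorem snd_eq_fst_of_splitting (hiso : Relation.Comp (flip S) S = (· = ·)) {i j k : Fin 3}
    {f f' : GrpMor H} (hf : S (i, j) f) (hf' : S (j, k) f') : f.2.1 = f'.1 := by
  have hj : S (j, j) (grpIdDom H (grpInv H f)) := (hmor _ _ (hmor _ _ hf).1).2
  have hj' : S (j, j) (grpIdDom H f') := (hmor _ _ hf').2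
  exact congrArg Sigma.fst (Relation.eq_of_flip_comp_eq_eq hiso hj hj')

variable (hco : Relation.Comp S (flip S) = Rrel)
include hco

theorem fst_eq_of_splitting {g : IndMor} {i i' : Fin 3} {k f : GrpMor H} (hg : S g k)
    (hf : S (i, i') f) (hkf : k.1 = f.1) : g.1 = i := by
  have hdom : S (indIdDom g) (grpIdDom H f) := grpIdDom_eq_of_fst_eq hkf ▸ (hmor _ _ hg).2
  have hi : Rrel (indIdDom g) (i, i) := Relation.rel_of_comp_flip_eq hco hdom (hmor _ _ hf).2
  exact congrArg Prod.fst hi.1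

theorem snd_eq_of_splitting {g : IndMor} {i i' : Fin 3} {k f : GrpMor H} (hg : S g k)
    (hf : S (i', i) f) (hkf : k.2.1 = f.2.1) : g.2 = i :=
  fst_eq_of_splitting hmor hco (hmor _ _ hg).1 (hmor _ _ hf).1 hkf

theorem not_daggerSplits_Rrel : Relation.Comp (flip S) S ≠ (· = ·) := by
  intro hiso
  obtain ⟨f, hf⟩ :=
    Relation.exists_of_comp_flip_eq hco (a := (0, 1)) ⟨rfl, by decide, by decide⟩
  obtain ⟨f', hf'⟩ :=
    Relation.exists_of_comp_flip_eq hco (a := (1, 2)) ⟨rfl, by decide, by decide⟩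
  have hff' : f.2.1 = f'.1 := snd_eq_fst_of_splitting hmor hiso hf hf'
  obtain ⟨g, hg⟩ :=
    Relation.exists_of_flip_comp_eq_eq hiso ⟨f.1, f'.2.1, f.2.2 ≫ eqToHom hff' ≫ f'.2.2⟩
  have hg₁ : g.1 = 0 := fst_eq_of_splitting hmor hco hg hf rfl
  have hg₂ : g.2 = 2 := snd_eq_of_splitting hmor hco hg hf' rfl
  exact (Relation.rel_of_comp_flip_eq hco hg hg).2.1 (Prod.ext hg₁ hg₂)

end Splitting

/-- `R` is a dagger idempotent in `CP*[Rel]` (a morphism of `CP*[Rel]` from the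
indiscrete groupoid on three objects to itself with `R† = R` and `R ∘ R = R`),
but `R` does not dagger split in `CP*[Rel]`: there is no small groupoid `H` and
`CP*[Rel]`-morphism `S` with `S† ∘ S = R` and `S ∘ S† = id_H`. -/
theorem stmt5 :
    -- R is a morphism in CP*[Rel] (respects inverses and identities-of-domains)
    (∀ g h, Rrel g h → Rrel (indInv g) (indInv h) ∧ Rrel (indIdDom g) (indIdDom h)) ∧
    -- R is a dagger idempotent
    flip Rrel = Rrel ∧ Relation.Comp Rrel Rrel = Rrel ∧
    -- R does not dagger split
    ¬ ∃ (H : Type) (instH : Groupoid H) (S : Rel IndMor (@GrpMor H instH)),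
        (∀ g h, S g h →
          S (indInv g) (@grpInv H instH h) ∧ S (indIdDom g) (@grpIdDom H instH h)) ∧
        Relation.Comp S (flip S) = Rrel ∧
        Relation.Comp (flip S) S = (fun a b => a = b) :=
  ⟨Rrel_preserves_indInv_indIdDom, Relation.flip_restrict_eq _, Relation.comp_restrict_self _,
    fun ⟨_, _, _, hmor, hco, hiso⟩ => not_daggerSplits_Rrel hmor hco hiso⟩
end

section
/- Let A = M_n(ℂ), and let a ∈ A satisfy a ≥ 0, ‖a‖ > 1, and Tr(a) = Tr(a²). Define ρ = a/Tr(a) and p : A → A by p(x) = Tr(ρx)·a. Then p is self-adjoint with respect to the Hilbert–Schmidt inner product ⟨x,y⟩ = Tr(x†y), idempotent (p∘p = p), completely positive, but not contractive: its operator norm satisfies ‖p‖ = ‖a‖ > 1. -/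
open scoped Matrix Matrix.Norms.L2Operator ComplexOrder InnerProductSpace Kronecker MatrixOrder

/-!
In Hilbert–Schmidt terms `p x = ⟪ρ, x⟫ • a`, and `ρ` is a real multiple of `a`, so `p` is
self-adjoint; `Tr (ρ a) = Tr (a²) / Tr a = 1` makes it idempotent. The functional
`x ↦ Tr (ρ x)` is a state: its amplification to block matrices is a partial trace of a positive
matrix, so it is completely positive, and tensoring with the positive matrix `a` keeps this.
By Cauchy–Schwarz in the GNS space of a state, `|Tr (ρ x)| ≤ ‖x‖`, hence `‖p x‖ ≤ ‖a‖ ‖x‖`,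
with equality at `x = 1` since `p 1 = a`.
-/

namespace PositiveLinearMap

variable {A : Type*} [CStarAlgebra A] [PartialOrder A] [StarOrderedRing A]

theorem norm_apply_le (f : A →ₚ[ℂ] ℂ) (x : A) : ‖f x‖ ≤ ‖f 1‖ * ‖x‖ := by
  have hone : ‖f.toPreGNS 1‖ ^ 2 = ‖f 1‖ := by
    simpa using congrArg norm (f.preGNS_norm_sq (f.toPreGNS 1))
  have hx : ‖f.toPreGNS x‖ ≤ ‖x‖ * ‖f.toPreGNS 1‖ := by
    simpa using (f.leftMulMapPreGNS x).le_of_opNorm_le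
      (LinearMap.mkContinuous_norm_le _ (norm_nonneg x) _) (f.toPreGNS 1)
  calc ‖f x‖ = ‖⟪f.toPreGNS 1, f.toPreGNS x⟫_ℂ‖ := by simp [preGNS_inner_def]
    _ ≤ ‖f.toPreGNS 1‖ * ‖f.toPreGNS x‖ := norm_inner_le_norm _ _
    _ ≤ ‖f.toPreGNS 1‖ * (‖x‖ * ‖f.toPreGNS 1‖) := by gcongr
    _ = ‖f 1‖ * ‖x‖ := by rw [← hone]; ring

end PositiveLinearMap

namespace Matrix

def partialTrace {ι κ n R : Type*} [Fintype n] [AddCommMonoid R]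
    (N : Matrix (ι × n) (κ × n) R) : Matrix ι κ R :=
  of fun i j => ∑ q, N (i, q) (j, q)

variable {ι n : Type*} [Fintype n]

theorem PosSemidef.partialTrace {R : Type*} [Ring R] [PartialOrder R] [StarRing R]
    [AddLeftMono R] {N : Matrix (ι × n) (ι × n) R} (hN : N.PosSemidef) :
    N.partialTrace.PosSemidef := by
  have hsum : N.partialTrace = ∑ q, N.submatrix (fun i => (i, q)) (fun i => (i, q)) := by
    ext i j
    simp [Matrix.partialTrace, sum_apply]
  rw [hsum]
  exact posSemidef_sum _ fun q _ => hN.submatrix _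

theorem partialTrace_one_kronecker_mul_mul {κ m R : Type*} [Fintype ι] [Fintype κ] [Fintype m]
    [DecidableEq ι] [DecidableEq κ] [CommSemiring R]
    (g : Matrix m n R) (h : Matrix n m R) (M : Matrix (ι × n) (κ × n) R) (i : ι) (j : κ) :
    ((1 ⊗ₖ g : Matrix (ι × m) (ι × n) R) * M * (1 ⊗ₖ h : Matrix (κ × n) (κ × m) R)).partialTrace
      i j = (h * g * of fun r s => M (i, r) (j, s)).trace := by
  simp only [partialTrace, trace, mul_apply, kroneckerMap_apply, one_apply, ite_mul, mul_ite,
    one_mul, zero_mul, mul_zero, Fintype.sum_prod_type, Finset.sum_mul, Finset.sum_ite_irrel,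
    Finset.sum_const_zero, Finset.sum_ite_eq, Finset.sum_ite_eq', Finset.mem_univ, if_true,
    of_apply, diag_apply]
  rw [Finset.sum_comm]
  refine Finset.sum_congr rfl fun s _ => ?_
  rw [Finset.sum_comm]
  exact Finset.sum_congr rfl fun r _ => Finset.sum_congr rfl fun q _ => by ring

variable {𝕜 : Type*} [RCLike 𝕜]

theorem PosSemidef.trace_mul_nonneg {ρ x : Matrix n n 𝕜} (hρ : ρ.PosSemidef)
    (hx : x.PosSemidef) : 0 ≤ (ρ * x).trace := by
  classical
  obtain ⟨g, rfl⟩ := CStarAlgebra.nonneg_iff_eq_star_mul_self.mp hρ.nonneg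
  rw [star_eq_conjTranspose, ← trace_mul_cycle]
  exact (hx.mul_mul_conjTranspose_same g).trace_nonneg

theorem PosSemidef.trace_mul_blocks [Fintype ι] {ρ : Matrix n n 𝕜}
    {M : Matrix (ι × n) (ι × n) 𝕜} (hρ : ρ.PosSemidef) (hM : M.PosSemidef) :
    (of fun i j => (ρ * of fun r s => M (i, r) (j, s)).trace).PosSemidef := by
  classical
  obtain ⟨g, rfl⟩ := CStarAlgebra.nonneg_iff_eq_star_mul_self.mp hρ.nonneg
  have hN := hM.mul_mul_conjTranspose_same ((1 : Matrix ι ι 𝕜) ⊗ₖ g)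
  rw [conjTranspose_kronecker, conjTranspose_one] at hN
  convert hN.partialTrace using 1
  ext i j
  rw [partialTrace_one_kronecker_mul_mul]
  rfl

theorem PosSemidef.norm_trace_mul_le [DecidableEq n] {ρ : Matrix n n ℂ} (hρ : ρ.PosSemidef)
    (x : Matrix n n ℂ) : ‖(ρ * x).trace‖ ≤ ‖ρ.trace‖ * ‖x‖ := by
  let φ : Matrix n n ℂ →ₚ[ℂ] ℂ := .mk₀ (traceLinearMap n ℂ ℂ ∘ₗ LinearMap.mulLeft ℂ ρ)
    fun y hy => hρ.trace_mul_nonneg (nonneg_iff_posSemidef.mp hy)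
  have hφ : ∀ y, φ y = (ρ * y).trace := fun _ => rfl
  simpa [hφ] using φ.norm_apply_le x

end Matrix

open Matrix

/-- Let `a ∈ Mₙ(ℂ)` satisfy `a ≥ 0`, `‖a‖ > 1` (operator norm) and
`Tr a = Tr a²`.  With `ρ = a / Tr a`, the map `p(x) = Tr(ρ x) • a` is
self-adjoint for the Hilbert–Schmidt inner product, idempotent, completely
positive (all matrix amplifications preserve positive semidefiniteness), but
not contractive: its operator norm is `‖a‖ > 1`. -/
theorem stmt14 (n : ℕ) (a : Matrix (Fin n) (Fin n) ℂ)
    (ha : a.PosSemidef) (hnorm : 1 < ‖a‖) (htr : a.trace = (a * a).trace)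
    (ρ : Matrix (Fin n) (Fin n) ℂ) (hρ : ρ = (a.trace)⁻¹ • a)
    (p : Matrix (Fin n) (Fin n) ℂ → Matrix (Fin n) (Fin n) ℂ)
    (hp : ∀ x, p x = ((ρ * x).trace) • a) :
    -- self-adjoint w.r.t. ⟪x, y⟫ = Tr (xᴴ y)
    (∀ x y, ((p x)ᴴ * y).trace = (xᴴ * p y).trace) ∧
    -- idempotent
    (∀ x, p (p x) = p x) ∧
    -- completely positive: every amplification preserves positivity
    (∀ (k : ℕ) (M : Matrix (Fin k × Fin n) (Fin k × Fin n) ℂ),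
      M.PosSemidef →
      Matrix.PosSemidef (Matrix.of (fun (ir js : Fin k × Fin n) =>
        p (Matrix.of (fun r s => M (ir.1, r) (js.1, s))) ir.2 js.2))) ∧
    -- operator norm is ‖a‖ > 1, so p is not contractive
    (∀ x, ‖p x‖ ≤ ‖a‖ * ‖x‖) ∧ (∃ x, ‖x‖ = 1 ∧ ‖p x‖ = ‖a‖) := by
  have ha0 : a ≠ 0 := by rintro rfl; norm_num at hnorm
  have htr0 : a.trace ≠ 0 := ha.trace_eq_zero_iff.not.mpr ha0
  have hρpsd : ρ.PosSemidef := hρ ▸ ha.smul (inv_nonneg.mpr ha.trace_nonneg)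
  have hρtr : ρ.trace = 1 := by rw [hρ, trace_smul, smul_eq_mul, inv_mul_cancel₀ htr0]
  have hρa : (ρ * a).trace = 1 := by
    rw [hρ, Matrix.smul_mul, trace_smul, smul_eq_mul, ← htr, inv_mul_cancel₀ htr0]
  refine ⟨fun x y => ?_, fun x => ?_, fun k M hM => ?_, fun x => ?_, ?_⟩
  · have htr_real : star a.trace = a.trace := by rw [← trace_conjTranspose, ha.1.eq]
    simp only [hp, hρ, conjTranspose_smul, Matrix.smul_mul, Matrix.mul_smul, trace_smul,
      smul_eq_mul, star_mul', star_inv₀, htr_real, ← trace_conjTranspose, conjTranspose_mul,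
      ha.1.eq]
    ring
  · rw [hp, hp, Matrix.mul_smul, trace_smul, hρa, smul_eq_mul, mul_one]
  · have hamp : Matrix.of (fun (ir js : Fin k × Fin n) =>
        p (Matrix.of (fun r s => M (ir.1, r) (js.1, s))) ir.2 js.2) =
        (of fun i j => (ρ * of fun r s => M (i, r) (j, s)).trace) ⊗ₖ a := by
      ext ⟨i, r⟩ ⟨j, s⟩
      simp [hp]
    rw [hamp]
    exact (hρpsd.trace_mul_blocks hM).kronecker ha
  · rw [hp, norm_smul, mul_comm ‖a‖]
    gcongr
    simpa [hρtr] using hρpsd.norm_trace_mul_le x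
  · have : Nontrivial (Matrix (Fin n) (Fin n) ℂ) := nontrivial_of_ne a 0 ha0
    exact ⟨1, CStarRing.norm_one, by rw [hp, mul_one, hρtr, one_smul]⟩
end

section
/- Let p : M_m(ℂ) → M_m(ℂ) be a unital completely positive projection (p = p† = p∘p, p(1) = 1). Then the range p(M_m) is a C*-algebra under the Choi–Effros product (a,b) ↦ p(ab), with the same involution and with unit 1. -/
open scoped Matrix Matrix.Norms.L2Operator ComplexOrder

/-!
A unital completely positive map `p` satisfies the Kadison–Schwarz inequality
`(p x)ᴴ * p x ≤ p (xᴴ * x)`. If `p x = x`, the difference `p (xᴴ * x) - xᴴ * x` is therefore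
positive semidefinite, and its trace vanishes because `p` preserves the trace (which is what
`p = p†` and `p 1 = 1` give). As the trace is faithful, `p (xᴴ * x) = xᴴ * x`, and by
polarization `p (x * y) = x * y` for all fixed points `x`, `y`. Thus the range of `p` is a
`*`-subalgebra of `M_m(ℂ)` on which the Choi–Effros product is the ordinary product.
-/

open scoped ComplexStarModule in
theorem LinearMap.map_star_of_map_isSelfAdjoint {A B : Type*} [AddCommGroup A] [Module ℂ A]
    [StarAddMonoid A] [StarModule ℂ A] [AddCommGroup B] [Module ℂ B] [StarAddMonoid B]
    [StarModule ℂ B] (f : A →ₗ[ℂ] B) (hf : ∀ a, IsSelfAdjoint a → IsSelfAdjoint (f a)) (x : A) :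
    f (star x) = star (f x) := by
  rw [← realPart_add_I_smul_imaginaryPart x]
  simp [(hf _ (ℜ x).2).star_eq, (hf _ (ℑ x).2).star_eq]

theorem LinearMap.map_star_mul_eq_of_map_star_mul_self_eq {A : Type*} [Ring A] [StarRing A]
    [Algebra ℂ A] [StarModule ℂ A] (f : A →ₗ[ℂ] A) {S : Submodule ℂ A}
    (hS : ∀ z ∈ S, f (star z * z) = star z * z) {x y : A} (hx : x ∈ S) (hy : y ∈ S) :
    f (star x * y) = star x * y := by
  have h₁ := hS (x + y) (add_mem hx hy)
  have h₂ := hS (x + Complex.I • y) (add_mem hx (S.smul_mem _ hy))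
  simp only [star_add, star_smul, add_mul, mul_add, smul_mul_assoc, mul_smul_comm, map_add,
    map_smul, hS x hx, hS y hy, Complex.star_def, Complex.conj_I] at h₁ h₂
  linear_combination (norm := match_scalars <;> ring_nf <;> simp [Complex.I_sq])
    (2 : ℂ)⁻¹ • h₁ - (Complex.I / 2) • h₂

namespace Matrix

variable {n l : Type*}

theorem posSemidef_comp_fin_two_iff {A B C D : Matrix n n ℂ} :
    (comp (Fin 2) (Fin 2) n n ℂ !![A, B; C, D]).PosSemidef ↔ (fromBlocks A B C D).PosSemidef := by
  let e : n ⊕ n ≃ Fin 2 × n :=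
    (Equiv.boolProdEquivSum n).symm.trans (finTwoEquiv.symm.prodCongr (Equiv.refl n))
  rw [← posSemidef_submatrix_equiv e]
  congr!
  ext (i | i) (j | j) <;> rfl

theorem posSemidef_comp_fin_two_iff_sub [Fintype n] [DecidableEq n] {B D : Matrix n n ℂ} :
    (comp (Fin 2) (Fin 2) n n ℂ !![1, B; Bᴴ, D]).PosSemidef ↔ (D - Bᴴ * B).PosSemidef := by
  let _ : Invertible (1 : Matrix n n ℂ) := invertibleOne
  rw [posSemidef_comp_fin_two_iff, PosDef.one.fromBlocks₁₁, inv_one, mul_one]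

/-- `p` is completely positive when every ampliation `id_{M_k} ⊗ p` is positive; a matrix over
`Fin k × n` is viewed, through `Matrix.comp`, as a `k × k` block matrix with blocks in `M_n`. -/
def IsCompletelyPositive (p : Matrix n n ℂ →ₗ[ℂ] Matrix l l ℂ) : Prop :=
  ∀ (k : ℕ) (M : Matrix (Fin k) (Fin k) (Matrix n n ℂ)),
    (comp (Fin k) (Fin k) n n ℂ M).PosSemidef → (comp (Fin k) (Fin k) l l ℂ (M.map p)).PosSemidef

namespace IsCompletelyPositive

section

variable {p : Matrix n n ℂ →ₗ[ℂ] Matrix l l ℂ} (hp : IsCompletelyPositive p)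
include hp

theorem posSemidef_map {A : Matrix n n ℂ} (hA : A.PosSemidef) : (p A).PosSemidef :=
  (hp 1 (of fun _ _ => A) (hA.submatrix Prod.snd)).submatrix (Prod.mk 0)

open scoped MatrixOrder in
theorem map_conjTranspose [Fintype n] [DecidableEq n] [Fintype l] [DecidableEq l]
    (x : Matrix n n ℂ) : p xᴴ = (p x)ᴴ :=
  p.map_star_of_map_isSelfAdjoint (fun _ ha => ha.map' <| PositiveLinearMap.mk₀ p fun _ hA =>
    nonneg_iff_posSemidef.mpr <| hp.posSemidef_map <| nonneg_iff_posSemidef.mp hA) x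

/-- The Kadison–Schwarz inequality. -/
theorem posSemidef_map_conjTranspose_mul_self_sub [Fintype n] [DecidableEq n] [Fintype l]
    [DecidableEq l] (hunital : p 1 = 1) (x : Matrix n n ℂ) :
    (p (xᴴ * x) - (p x)ᴴ * p x).PosSemidef := by
  have hM : (comp (Fin 2) (Fin 2) n n ℂ !![1, x; xᴴ, xᴴ * x]).PosSemidef := by
    rw [posSemidef_comp_fin_two_iff_sub, sub_self]
    exact PosSemidef.zero
  have hpM : !![1, x; xᴴ, xᴴ * x].map p = !![1, p x; (p x)ᴴ, p (xᴴ * x)] := by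
    ext i j
    fin_cases i <;> fin_cases j <;> simp [hunital, hp.map_conjTranspose]
  simpa [hpM, posSemidef_comp_fin_two_iff_sub] using hp 2 _ hM

end

section

variable [Fintype n] [DecidableEq n] {p : Matrix n n ℂ →ₗ[ℂ] Matrix n n ℂ}
  (hp : IsCompletelyPositive p) (hunital : p 1 = 1) (htrace : ∀ y, (p y).trace = y.trace)
include hp hunital htrace

theorem map_conjTranspose_mul_self_of_map_eq {x : Matrix n n ℂ} (hx : p x = x) :
    p (xᴴ * x) = xᴴ * x := by
  have hpos := hp.posSemidef_map_conjTranspose_mul_self_sub hunital x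
  rw [hx] at hpos
  exact sub_eq_zero.mp <| hpos.trace_eq_zero_iff.mp <| by rw [trace_sub, htrace, sub_self]

theorem map_mul_of_map_eq {x y : Matrix n n ℂ} (hx : p x = x) (hy : p y = y) :
    p (x * y) = x * y := by
  have hxH : p xᴴ = xᴴ := by rw [hp.map_conjTranspose, hx]
  simpa [star_eq_conjTranspose] using
    p.map_star_mul_eq_of_map_star_mul_self_eq (S := LinearMap.eqLocus p .id)
      (fun z hz => hp.map_conjTranspose_mul_self_of_map_eq hunital htrace hz) hxH hy

end

end IsCompletelyPositive

end Matrix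

/-- Choi–Effros for matrix algebras: if `p : M_m(ℂ) → M_m(ℂ)` is a unital
completely positive projection (`p = p† = p ∘ p`, `p 1 = 1`, with `p†` the
adjoint for the Hilbert–Schmidt inner product), then the range of `p` is a
C*-algebra under the Choi–Effros product `(a, b) ↦ p (a * b)`, with the same
involution, the same (operator) norm, and unit `1`. -/
theorem stmt15 (m : ℕ)
    (p : Matrix (Fin m) (Fin m) ℂ →ₗ[ℂ] Matrix (Fin m) (Fin m) ℂ)
    -- p is self-adjoint w.r.t. ⟪x, y⟫ = Tr (xᴴ y)
    (hsa : ∀ x y, ((p x)ᴴ * y).trace = (xᴴ * p y).trace)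
    -- p is idempotent
    (hidem : ∀ x, p (p x) = p x)
    -- p is completely positive
    (hcp : ∀ (k : ℕ) (M : Matrix (Fin k × Fin m) (Fin k × Fin m) ℂ),
      M.PosSemidef →
      Matrix.PosSemidef (Matrix.of (fun (ir js : Fin k × Fin m) =>
        p (Matrix.of (fun r s => M (ir.1, r) (js.1, s))) ir.2 js.2)))
    -- p is unital
    (hunital : p 1 = 1) :
    -- the range of p is a C*-algebra under the product (a, b) ↦ p (a * b):
    (1 : Matrix (Fin m) (Fin m) ℂ) ∈ Set.range p ∧
    (∀ x ∈ Set.range p, xᴴ ∈ Set.range p) ∧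
    (∀ x ∈ Set.range p, ∀ y ∈ Set.range p, p (x * y) ∈ Set.range p) ∧
    -- associativity of the Choi–Effros product
    (∀ x ∈ Set.range p, ∀ y ∈ Set.range p, ∀ z ∈ Set.range p,
      p (p (x * y) * z) = p (x * p (y * z))) ∧
    -- 1 is the unit for the Choi–Effros product
    (∀ x ∈ Set.range p, p (1 * x) = x ∧ p (x * 1) = x) ∧
    -- the involution is an anti-homomorphism for the Choi–Effros product
    (∀ x ∈ Set.range p, ∀ y ∈ Set.range p, (p (x * y))ᴴ = p (yᴴ * xᴴ)) ∧
    -- the C*-identity holds for the operator norm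
    (∀ x ∈ Set.range p, ‖p (xᴴ * x)‖ = ‖x‖ ^ 2) := by
  have hp : Matrix.IsCompletelyPositive p := fun k M hM => hcp k _ hM
  have htrace (y : Matrix (Fin m) (Fin m) ℂ) : (p y).trace = y.trace := by
    simpa [hunital] using (hsa 1 y).symm
  have hfix : ∀ x ∈ Set.range p, p x = x := by
    rintro _ ⟨a, rfl⟩
    exact hidem a
  have hstar : ∀ x ∈ Set.range p, xᴴ ∈ Set.range p := by
    rintro _ ⟨a, rfl⟩
    exact ⟨aᴴ, hp.map_conjTranspose a⟩
  have hmul : ∀ x ∈ Set.range p, ∀ y ∈ Set.range p, p (x * y) = x * y := fun x hx y hy =>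
    hp.map_mul_of_map_eq hunital htrace (hfix x hx) (hfix y hy)
  refine ⟨⟨1, hunital⟩, hstar, fun x _ y _ => ⟨x * y, rfl⟩, fun x hx y hy z hz => ?_,
    fun x hx => ⟨by rw [one_mul, hfix x hx], by rw [mul_one, hfix x hx]⟩,
    fun x hx y hy => ?_, fun x hx => ?_⟩
  · rw [hmul x hx y hy, hmul y hy z hz, mul_assoc]
  · rw [hmul x hx y hy, hmul _ (hstar y hy) _ (hstar x hx), Matrix.conjTranspose_mul]
  · rw [hmul _ (hstar x hx) x hx, sq, Matrix.l2_opNorm_conjTranspose_mul_self]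
end

section
/- In CP*[Rel] (groupoids and inverse-respecting relations), the one-object groupoid ℤ₂ is not isomorphic to any finite disjoint union of indiscrete groupoids. -/
/-!
Mutually inverse relations are graphs of mutually inverse bijections, so an isomorphism between
`ℤ₂` and a union of indiscrete groupoids would match the generator `1` with a single morphism `h`.
Since the isomorphism respects inverses and `1` is its own inverse, so is `h`; but in an indiscrete
groupoid only identities are self-inverse, and the isomorphism also matches identities with
identities, forcing `h` to correspond to `0` as well.
-/

/-- Morphisms of a disjoint union of indiscrete groupoids: one component for
each `i : ι`, with object set `O i`, and exactly one morphism `(x, y) : x → y`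
between each ordered pair of objects of a component. -/
abbrev IndUnionMor (ι : Type) (O : ι → Type) : Type := Σ i : ι, O i × O i

/-- Inverse in a disjoint union of indiscrete groupoids. -/
def iuInv {ι : Type} {O : ι → Type} (f : IndUnionMor ι O) : IndUnionMor ι O :=
  ⟨f.1, (f.2.2, f.2.1)⟩

/-- Identity on the domain in a disjoint union of indiscrete groupoids. -/
def iuIdDom {ι : Type} {O : ι → Type} (f : IndUnionMor ι O) : IndUnionMor ι O :=
  ⟨f.1, (f.2.1, f.2.1)⟩

namespace Relation

variable {α β : Type*} {R : α → β → Prop} {S : β → α → Prop}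

theorem rightUnique_of_comp_eq_eq (hRS : Comp R S = Eq) (hSR : Comp S R = Eq) :
    Relator.RightUnique R := by
  intro a b c hab hac
  obtain ⟨d, -, hda⟩ : Comp R S a a := by rw [hRS]
  have hdb : d = b := by rw [← hSR]; exact ⟨a, hda, hab⟩
  have hdc : d = c := by rw [← hSR]; exact ⟨a, hda, hac⟩
  exact hdb.symm.trans hdc

end Relation

theorem iuIdDom_eq_self_of_iuInv_eq_self {ι : Type} {O : ι → Type} {f : IndUnionMor ι O}
    (hf : iuInv f = f) : iuIdDom f = f := by
  obtain ⟨i, x, y⟩ := f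
  simp only [iuInv, Sigma.mk.injEq, heq_eq_eq, Prod.mk.injEq, true_and] at hf
  simp only [iuIdDom, hf.2]

/-- In `CP*[Rel]` (small groupoids with inverse-respecting relations between
morphism sets as morphisms), the one-object groupoid `ℤ₂` (morphism set
`ZMod 2`, inverse `g ↦ -g`, identity `0`) is not isomorphic to any finite
disjoint union of indiscrete groupoids: there are no inverse-respecting
relations `R`, `S` composing to the identities on both sides. -/
theorem stmt19 :
    ¬ ∃ (ι : Type) (_ : Finite ι) (O : ι → Type)
      (R : Rel (ZMod 2) (IndUnionMor ι O)) (S : Rel (IndUnionMor ι O) (ZMod 2)),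
      (∀ g h, R g h → R (-g) (iuInv h) ∧ R 0 (iuIdDom h)) ∧
      (∀ h g, S h g → S (iuInv h) (-g) ∧ S (iuIdDom h) 0) ∧
      Relation.Comp R S = (fun a b : ZMod 2 => a = b) ∧
      Relation.Comp S R = (fun a b : IndUnionMor ι O => a = b) := by
  rintro ⟨ι, -, O, R, S, hR, hS, hRS, hSR⟩
  have hR_unique := Relation.rightUnique_of_comp_eq_eq hRS hSR
  have hS_unique := Relation.rightUnique_of_comp_eq_eq hSR hRS
  obtain ⟨h, hR1h, hSh1⟩ : Relation.Comp R S 1 1 := by rw [hRS]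
  -- `(-1 : ZMod 2)` is `1` definitionally
  have h_self_inv : iuInv h = h := hR_unique (hR 1 h hR1h).1 hR1h
  have hSh0 : S h 0 := iuIdDom_eq_self_of_iuInv_eq_self h_self_inv ▸ (hS h 1 hSh1).2
  exact one_ne_zero (hS_unique hSh1 hSh0)
end
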